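/- arXiv:1801.06255 — 8 statements merged into one kernel-verified Lean document; each statement's English description precedes it below -/
import Mathlib

section
/- If a privacy mechanism W is α-locally differentially private, then its Dobrushin coefficient satisfies η_TV(W) = max_{x1,x2∈X} (1/2) ∑_{y∈Y} |W(x1,y) − W(x2,y)| ≤ (2^α − 1)/(2^α + 1). -/
open Finset

lemma ptwise (k a b : ℝ) (hk : 1 ≤ k) (ha : 0 ≤ a) (hb : 0 ≤ b)
    (h1 : a ≤ k * b) (h2 : b ≤ k * a) :
    |a - b| ≤ (k - 1) / (k + 1) * (a + b) := by
  have hk1 : 0 < k + 1 := by linarith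
  rw [div_mul_eq_mul_div, le_div_iff₀ hk1]
  rcases abs_cases (a - b) with ⟨h, _⟩ | ⟨h, _⟩ <;> rw [h] <;> nlinarith

/-- the Dobrushin coefficient of an α-locally differentially private
mechanism is at most `(2^α − 1)/(2^α + 1)`. -/
theorem stmt1 {X Y : Type*} [Fintype X] [Fintype Y] [Nonempty X] [Nonempty Y]
    (α : ℝ) (hα : 0 ≤ α)
    (W : X → Y → ℝ)
    (hW0 : ∀ x y, 0 ≤ W x y) (hW1 : ∀ x, ∑ y, W x y = 1)
    (hLDP : ∀ x1 x2 y, W x1 y ≤ (2:ℝ) ^ α * W x2 y) :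
    (⨆ x1 : X, ⨆ x2 : X, (1/2) * ∑ y, |W x1 y - W x2 y|) ≤
      ((2:ℝ) ^ α - 1) / ((2:ℝ) ^ α + 1) := by
  set k : ℝ := (2:ℝ) ^ α with hkdef
  have hk : 1 ≤ k := Real.one_le_rpow one_le_two hα
  have hc0 : 0 ≤ (k - 1) / (k + 1) := div_nonneg (by linarith) (by linarith)
  have key : ∀ x1 x2 : X, (1/2) * ∑ y, |W x1 y - W x2 y| ≤ (k - 1) / (k + 1) := by
    intro x1 x2
    have hsum : ∑ y, |W x1 y - W x2 y| ≤ ∑ y, (k - 1) / (k + 1) * (W x1 y + W x2 y) := by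
      apply Finset.sum_le_sum
      intro y _
      exact ptwise k _ _ hk (hW0 x1 y) (hW0 x2 y) (hLDP x1 x2 y) (hLDP x2 x1 y)
    have : ∑ y, (k - 1) / (k + 1) * (W x1 y + W x2 y) = (k - 1) / (k + 1) * 2 := by
      rw [← Finset.mul_sum, Finset.sum_add_distrib, hW1, hW1]; ring
    rw [this] at hsum
    linarith
  apply Real.iSup_le _ hc0
  intro x1
  exact Real.iSup_le (fun x2 => key x1 x2) hc0
end

section
/- For every privacy mechanism W with W_* := min_{x∈X, y∈Y} W(x,y) > 0, we have max_{y∈Y} max_{x1,x2∈X} W(x1,y)/W(x2,y) ≤ 1 + η_TV(W)/W_*. -/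
open Finset

/-- for a privacy mechanism with `W_* > 0`, every ratio
`W(x1,y)/W(x2,y)` is bounded by `1 + η_TV(W)/W_*`. -/
theorem stmt2 {X Y : Type*} [Fintype X] [Fintype Y] [Nonempty X] [Nonempty Y]
    (W : X → Y → ℝ)
    (hW0 : ∀ x y, 0 ≤ W x y) (hW1 : ∀ x, ∑ y, W x y = 1)
    (hpos : 0 < ⨅ x : X, ⨅ y : Y, W x y) :
    ∀ y : Y, ∀ x1 x2 : X,
      W x1 y / W x2 y ≤
        1 + (⨆ a : X, ⨆ b : X, (1/2) * ∑ y', |W a y' - W b y'|) /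
              (⨅ x : X, ⨅ y' : Y, W x y') := by
  intro y x1 x2
  set m : ℝ := ⨅ x : X, ⨅ y' : Y, W x y' with hm
  set η : ℝ := ⨆ a : X, ⨆ b : X, (1/2) * ∑ y', |W a y' - W b y'| with hη
  have hmle : ∀ x y', m ≤ W x y' := by
    intro x y'
    refine le_trans (ciInf_le (Finite.bddBelow_range _) x) (ciInf_le (Finite.bddBelow_range _) y')
  have hηge : (1/2) * ∑ y', |W x1 y' - W x2 y'| ≤ η := by
    refine le_trans (le_ciSup (f := fun b : X => (1/2) * ∑ y', |W x1 y' - W b y'|)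
      (Finite.bddAbove_range _) x2) ?_
    exact le_ciSup (f := fun a : X => ⨆ b : X, (1/2) * ∑ y', |W a y' - W b y'|)
      (Finite.bddAbove_range _) x1
  have hη0 : (0:ℝ) ≤ η := by
    refine le_trans ?_ hηge
    positivity
  -- key: W x1 y - W x2 y ≤ (1/2) * ∑ |diff|
  have hsum0 : ∑ y', (W x1 y' - W x2 y') = 0 := by
    rw [Finset.sum_sub_distrib, hW1, hW1]; ring
  have hkey : W x1 y - W x2 y ≤ (1/2) * ∑ y', |W x1 y' - W x2 y'| := by
    have h1 : W x1 y - W x2 y ≤ ∑ y', ((W x1 y' - W x2 y') + |W x1 y' - W x2 y'|) / 2 := by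
      refine le_trans ?_ (Finset.single_le_sum (f := fun y' =>
        ((W x1 y' - W x2 y') + |W x1 y' - W x2 y'|) / 2) ?_ (Finset.mem_univ y))
      · have := le_abs_self (W x1 y - W x2 y); linarith
      · intro i _
        have := neg_abs_le (W x1 i - W x2 i); linarith
    have h2 : ∑ y', ((W x1 y' - W x2 y') + |W x1 y' - W x2 y'|) / 2
        = (1/2) * ∑ y', |W x1 y' - W x2 y'| := by
      rw [← Finset.sum_div, Finset.sum_add_distrib, hsum0]
      ring
    linarith
  have hWm : m ≤ W x2 y := hmle x2 y
  have hW2pos : 0 < W x2 y := lt_of_lt_of_le hpos hWm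
  rw [div_le_iff₀ hW2pos]
  have h3 : η ≤ (η / m) * W x2 y := by
    have : (η / m) * m ≤ (η / m) * W x2 y := by
      apply mul_le_mul_of_nonneg_left hWm; positivity
    rwa [div_mul_cancel₀ _ (ne_of_gt hpos)] at this
  have : W x1 y ≤ W x2 y + η := by
    have := le_trans hkey hηge; linarith
  nlinarith
end

section
/- If a privacy mechanism W is α-maximal-leakage private, i.e., ∑_{y∈Y} max_{x∈X} W(x,y) ≤ 2^α, then its Dobrushin coefficient satisfies η_TV(W) ≤ min{1, 2^α − 1}. -/
open Finset

/-- α-maximal-leakage privacy implies `η_TV(W) ≤ min{1, 2^α − 1}`. -/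
theorem stmt4 {X Y : Type*} [Fintype X] [Fintype Y] [Nonempty X] [Nonempty Y]
    (α : ℝ)
    (W : X → Y → ℝ)
    (hW0 : ∀ x y, 0 ≤ W x y) (hW1 : ∀ x, ∑ y, W x y = 1)
    (hMaxL : ∑ y, (⨆ x : X, W x y) ≤ (2:ℝ) ^ α) :
    (⨆ x1 : X, ⨆ x2 : X, (1/2) * ∑ y, |W x1 y - W x2 y|) ≤
      min 1 ((2:ℝ) ^ α - 1) := by
  refine ciSup_le fun x1 => ciSup_le fun x2 => le_min ?_ ?_
  · have h : ∑ y, |W x1 y - W x2 y| ≤ ∑ y, (W x1 y + W x2 y) := by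
      apply Finset.sum_le_sum
      intro y _
      have := abs_sub (W x1 y) (W x2 y)
      rw [abs_of_nonneg (hW0 x1 y), abs_of_nonneg (hW0 x2 y)] at this
      exact this
    rw [Finset.sum_add_distrib, hW1, hW1] at h
    linarith
  · have h : ∑ y, |W x1 y - W x2 y| ≤
        ∑ y, (2 * (⨆ x : X, W x y) - (W x1 y + W x2 y)) := by
      apply Finset.sum_le_sum
      intro y _
      have h1 : W x1 y ≤ ⨆ x : X, W x y :=
        le_ciSup (f := fun x => W x y) (Set.Finite.bddAbove (Set.finite_range _)) x1
      have h2 : W x2 y ≤ ⨆ x : X, W x y :=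
        le_ciSup (f := fun x => W x y) (Set.Finite.bddAbove (Set.finite_range _)) x2
      rw [abs_sub_le_iff]
      constructor <;> linarith
    rw [Finset.sum_sub_distrib, Finset.sum_add_distrib, hW1, hW1,
      ← Finset.mul_sum] at h
    linarith
end

section
/- For every privacy mechanism W on finite sets X, Y, we have ∑_{y∈Y} max_{x∈X} W(x,y) ≤ (|X|/2)(1 + η_TV(W)). -/
open Finset

/-- `∑_y max_x W(x,y) ≤ (|X|/2)(1 + η_TV(W))`. -/
theorem stmt5 {X Y : Type*} [Fintype X] [Fintype Y] [Nonempty X] [Nonempty Y]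
    (hX : 2 ≤ Fintype.card X)
    (W : X → Y → ℝ)
    (hW0 : ∀ x y, 0 ≤ W x y) (hW1 : ∀ x, ∑ y, W x y = 1) :
    ∑ y, (⨆ x : X, W x y) ≤
      ((Fintype.card X : ℝ) / 2) *
        (1 + ⨆ x1 : X, ⨆ x2 : X, (1/2) * ∑ y, |W x1 y - W x2 y|) := by
  classical
  set n := Fintype.card X with hn
  set η := ⨆ x1 : X, ⨆ x2 : X, (1/2) * ∑ y, |W x1 y - W x2 y| with hηdef
  have hbdd : ∀ a b : X, (1/2) * ∑ y, |W a y - W b y| ≤ η := by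
    intro a b
    have h2 : (1/2) * ∑ y, |W a y - W b y| ≤
        ⨆ x2 : X, (1/2) * ∑ y, |W a y - W x2 y| :=
      le_ciSup (f := fun x2 : X => (1/2) * ∑ y, |W a y - W x2 y|)
        (Set.Finite.bddAbove (Set.finite_range _)) b
    exact h2.trans (le_ciSup (f := fun x1 : X => ⨆ x2 : X, (1/2) * ∑ y, |W x1 y - W x2 y|)
      (Set.Finite.bddAbove (Set.finite_range _)) a)
  have hmax : ∀ a b : ℝ, max a b = (a + b + |a - b|) / 2 := by
    intro a b
    rcases le_total a b with h | h
    · rw [max_eq_right h, abs_of_nonpos (by linarith)]; ring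
    · rw [max_eq_left h, abs_of_nonneg (by linarith)]; ring
  have hpair : ∀ a b : X, ∑ y, max (W a y) (W b y) ≤ 1 + η := by
    intro a b
    have : ∑ y, max (W a y) (W b y)
        = 1 + (1/2) * ∑ y, |W a y - W b y| := by
      simp_rw [hmax]
      rw [← Finset.sum_div, Finset.sum_add_distrib, Finset.sum_add_distrib,
        hW1 a, hW1 b]
      ring
    rw [this]
    linarith [hbdd a b]
  have hn1 : (1 : ℕ) ≤ n := by omega
  have key : ∀ y, 2 * ((n : ℝ) - 1) * (⨆ x, W x y) ≤
      ∑ p ∈ (Finset.univ : Finset X).offDiag, max (W p.1 y) (W p.2 y) := by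
    intro y
    obtain ⟨x, hx⟩ := exists_eq_ciSup_of_finite (f := fun x => W x y)
    rw [← hx]
    set T : Finset (X × X) :=
      ({x} ×ˢ (Finset.univ.erase x)) ∪ ((Finset.univ.erase x) ×ˢ {x}) with hT
    have hTsub : T ⊆ (Finset.univ : Finset X).offDiag := by
      intro p hp
      simp only [hT, Finset.mem_union, Finset.mem_product, Finset.mem_singleton,
        Finset.mem_erase, Finset.mem_univ, and_true] at hp
      simp only [Finset.mem_offDiag, Finset.mem_univ, true_and]
      rcases hp with ⟨h1, h2⟩ | ⟨h1, h2⟩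
      · rw [h1]; exact fun h => h2 h.symm
      · rw [h2]; exact h1
    have hcard : T.card = 2 * (n - 1) := by
      rw [hT, Finset.card_union_of_disjoint, Finset.card_product,
        Finset.card_product, Finset.card_singleton,
        Finset.card_erase_of_mem (Finset.mem_univ x)]
      · rw [Finset.card_univ, ← hn]; ring
      · rw [Finset.disjoint_left]
        intro p hp hp'
        simp only [Finset.mem_product, Finset.mem_singleton, Finset.mem_erase] at hp hp'
        exact hp'.1.1 hp.1
    have hterm : ∀ p ∈ T, W x y ≤ max (W p.1 y) (W p.2 y) := by
      intro p hp
      simp only [hT, Finset.mem_union, Finset.mem_product, Finset.mem_singleton,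
        Finset.mem_erase] at hp
      rcases hp with ⟨h1, _⟩ | ⟨_, h2⟩
      · rw [← h1]; exact le_max_left _ _
      · rw [← h2]; exact le_max_right _ _
    have h1 : (T.card : ℝ) * W x y ≤ ∑ p ∈ T, max (W p.1 y) (W p.2 y) := by
      have := Finset.card_nsmul_le_sum T (fun p => max (W p.1 y) (W p.2 y)) (W x y) hterm
      simpa [nsmul_eq_mul] using this
    have h2 : ∑ p ∈ T, max (W p.1 y) (W p.2 y) ≤
        ∑ p ∈ (Finset.univ : Finset X).offDiag, max (W p.1 y) (W p.2 y) := by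
      apply Finset.sum_le_sum_of_subset_of_nonneg hTsub
      intro p _ _
      exact le_max_of_le_left (hW0 _ _)
    have hcast : (T.card : ℝ) = 2 * ((n : ℝ) - 1) := by
      rw [hcard]
      push_cast [Nat.cast_sub hn1]
      ring
    calc 2 * ((n : ℝ) - 1) * W x y = (T.card : ℝ) * W x y := by rw [hcast]
      _ ≤ _ := h1.trans h2
  have hsum : 2 * ((n : ℝ) - 1) * ∑ y, (⨆ x, W x y) ≤
      (n : ℝ) * ((n : ℝ) - 1) * (1 + η) := by
    have h1 : 2 * ((n : ℝ) - 1) * ∑ y, (⨆ x, W x y) ≤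
        ∑ y, ∑ p ∈ (Finset.univ : Finset X).offDiag, max (W p.1 y) (W p.2 y) := by
      rw [Finset.mul_sum]
      exact Finset.sum_le_sum fun y _ => key y
    have h2 : ∑ y, ∑ p ∈ (Finset.univ : Finset X).offDiag, max (W p.1 y) (W p.2 y)
        = ∑ p ∈ (Finset.univ : Finset X).offDiag, ∑ y, max (W p.1 y) (W p.2 y) :=
      Finset.sum_comm
    have h3 : ∑ p ∈ (Finset.univ : Finset X).offDiag, ∑ y, max (W p.1 y) (W p.2 y) ≤
        ((Finset.univ : Finset X).offDiag.card : ℝ) * (1 + η) := by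
      have := Finset.sum_le_card_nsmul (Finset.univ : Finset X).offDiag
        (fun p => ∑ y, max (W p.1 y) (W p.2 y)) (1 + η)
        (fun p _ => hpair p.1 p.2)
      simpa [nsmul_eq_mul, mul_add] using this
    have hcard : ((((Finset.univ : Finset X).offDiag.card : ℕ) : ℝ)) = (n : ℝ) * ((n : ℝ) - 1) := by
      rw [Finset.offDiag_card, Finset.card_univ, ← hn,
        Nat.cast_sub (Nat.le_mul_of_pos_left n (by omega))]
      push_cast
      ring
    calc 2 * ((n : ℝ) - 1) * ∑ y, (⨆ x, W x y)
        ≤ ∑ p ∈ (Finset.univ : Finset X).offDiag, ∑ y, max (W p.1 y) (W p.2 y) := by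
          rw [← h2]; exact h1
      _ ≤ ((Finset.univ : Finset X).offDiag.card : ℝ) * (1 + η) := h3
      _ = (n : ℝ) * ((n : ℝ) - 1) * (1 + η) := by rw [hcard]
  have hn2 : (2 : ℝ) ≤ (n : ℝ) := by exact_mod_cast hX
  have hpos : (0:ℝ) < (n : ℝ) - 1 := by linarith
  have hA : ((n:ℝ)-1) * (2 * ∑ y, (⨆ x, W x y)) ≤ ((n:ℝ)-1) * ((n:ℝ)*(1+η)) := by
    calc ((n:ℝ)-1) * (2 * ∑ y, (⨆ x, W x y)) = 2*((n:ℝ)-1) * ∑ y, (⨆ x, W x y) := by ring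
      _ ≤ (n:ℝ)*((n:ℝ)-1)*(1+η) := hsum
      _ = ((n:ℝ)-1)*((n:ℝ)*(1+η)) := by ring
  have h2S := le_of_mul_le_mul_left hA hpos
  linarith [h2S]
end

section
/- For every privacy mechanism W, 1 + η_TV(W) ≤ ∑_{y∈Y} max_{x∈X} W(x,y). -/
open Finset

/-- `1 + η_TV(W) ≤ ∑_y max_x W(x,y)`. -/
theorem stmt6 {X Y : Type*} [Fintype X] [Fintype Y] [Nonempty X] [Nonempty Y]
    (W : X → Y → ℝ)
    (hW0 : ∀ x y, 0 ≤ W x y) (hW1 : ∀ x, ∑ y, W x y = 1) :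
    1 + (⨆ x1 : X, ⨆ x2 : X, (1/2) * ∑ y, |W x1 y - W x2 y|) ≤
      ∑ y, (⨆ x : X, W x y) := by
  have hbdd : ∀ y : Y, BddAbove (Set.range fun x => W x y) :=
    fun y => (Set.finite_range _).bddAbove
  rw [add_comm, ← le_sub_iff_add_le]
  refine ciSup_le fun x1 => ciSup_le fun x2 => ?_
  have key : ∀ y, |W x1 y - W x2 y| = 2 * max (W x1 y) (W x2 y) - W x1 y - W x2 y := by
    intro y
    rcases le_total (W x1 y) (W x2 y) with h | h
    · rw [abs_of_nonpos (by linarith), max_eq_right h]; ring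
    · rw [abs_of_nonneg (by linarith), max_eq_left h]; ring
  have hsum : ∑ y, |W x1 y - W x2 y| = 2 * (∑ y, max (W x1 y) (W x2 y)) - 1 - 1 := by
    simp_rw [key]
    rw [Finset.sum_sub_distrib, Finset.sum_sub_distrib, hW1, hW1, Finset.mul_sum]
  have hle : ∑ y, max (W x1 y) (W x2 y) ≤ ∑ y, (⨆ x : X, W x y) := by
    refine Finset.sum_le_sum fun y _ => ?_
    exact max_le (le_ciSup (hbdd y) x1) (le_ciSup (hbdd y) x2)
  rw [hsum]
  linarith
end

section
/- For every privacy mechanism W, 2·η_TV(W)/(1 − η_TV(W)) + 1 ≤ max_{y∈Y} max_{x,x'∈X} W(x,y)/W(x',y), provided η_TV(W) < 1. -/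
open Finset

/-- if `η_TV(W) < 1`, then
`2·η_TV(W)/(1 − η_TV(W)) + 1 ≤ max_{y} max_{x,x'} W(x,y)/W(x',y)`,
with the ratio maximum taken in the extended (nonnegative) reals so that
`a/0 = ∞` for `a > 0`. -/
theorem stmt8 {X Y : Type*} [Fintype X] [Fintype Y] [Nonempty X] [Nonempty Y]
    (W : X → Y → ℝ)
    (hW0 : ∀ x y, 0 ≤ W x y) (hW1 : ∀ x, ∑ y, W x y = 1)
    (hlt : (⨆ x1 : X, ⨆ x2 : X, (1/2) * ∑ y, |W x1 y - W x2 y|) < 1) :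
    ENNReal.ofReal
        (2 * (⨆ x1 : X, ⨆ x2 : X, (1/2) * ∑ y, |W x1 y - W x2 y|) /
            (1 - ⨆ x1 : X, ⨆ x2 : X, (1/2) * ∑ y, |W x1 y - W x2 y|) + 1) ≤
      ⨆ y : Y, ⨆ x : X, ⨆ x' : X,
        ENNReal.ofReal (W x y) / ENNReal.ofReal (W x' y) := by
  set η := (⨆ x1 : X, ⨆ x2 : X, (1/2) * ∑ y, |W x1 y - W x2 y|) with hηdef
  set R := ⨆ y : Y, ⨆ x : X, ⨆ x' : X,
      ENNReal.ofReal (W x y) / ENNReal.ofReal (W x' y) with hRdef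
  by_cases hRtop : R = ⊤
  · rw [hRtop]; exact le_top
  obtain ⟨x0⟩ := ‹Nonempty X›
  have hex : ∃ y0, 0 < W x0 y0 := by
    by_contra h
    push_neg at h
    have h0 : ∑ y, W x0 y = 0 :=
      Finset.sum_eq_zero fun y _ => le_antisymm (h y) (hW0 x0 y)
    rw [hW1] at h0; norm_num at h0
  obtain ⟨y0, hy0⟩ := hex
  have hle_R : ∀ y x x', ENNReal.ofReal (W x y) / ENNReal.ofReal (W x' y) ≤ R := by
    intro y x x'
    rw [hRdef]
    exact le_iSup_of_le y (le_iSup_of_le x (le_iSup (fun x' => ENNReal.ofReal (W x y) / ENNReal.ofReal (W x' y)) x'))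
  have h1R : (1 : ENNReal) ≤ R := by
    have h := hle_R y0 x0 x0
    rwa [ENNReal.div_self (ENNReal.ofReal_pos.mpr hy0).ne' ENNReal.ofReal_ne_top] at h
  set c := R.toReal with hcdef
  have hc1 : (1 : ℝ) ≤ c := by
    have h := (ENNReal.toReal_le_toReal ENNReal.one_ne_top hRtop).mpr h1R
    simpa using h
  have hRc : R = ENNReal.ofReal c := (ENNReal.ofReal_toReal hRtop).symm
  have key : ∀ x x' y, W x y ≤ c * W x' y := by
    intro x x' y
    rcases eq_or_lt_of_le (hW0 x' y) with h0 | h0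
    · rcases eq_or_lt_of_le (hW0 x y) with h0' | h0'
      · rw [← h0', ← h0]; simp
      · exfalso
        have h := hle_R y x x'
        rw [← h0] at h
        simp only [ENNReal.ofReal_zero] at h
        rw [ENNReal.div_zero (ENNReal.ofReal_pos.mpr h0').ne'] at h
        exact hRtop (top_le_iff.mp h)
    · have h := hle_R y x x'
      rw [ENNReal.div_le_iff_le_mul (Or.inl (ENNReal.ofReal_pos.mpr h0).ne')
        (Or.inl ENNReal.ofReal_ne_top)] at h
      rw [hRc, ← ENNReal.ofReal_mul (by linarith)] at h
      exact (ENNReal.ofReal_le_ofReal_iff (mul_nonneg (by linarith) (hW0 x' y))).mp h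
  have hTV : ∀ x1 x2, (1/2) * ∑ y, |W x1 y - W x2 y| ≤ (c - 1) / (c + 1) := by
    intro x1 x2
    have hsum : ∑ y, |W x1 y - W x2 y| * (c + 1)
        ≤ ∑ y, (c - 1) * (W x1 y + W x2 y) := by
      apply Finset.sum_le_sum
      intro y _
      have h1 := key x1 x2 y
      have h2 := key x2 x1 y
      rcases le_total (W x1 y) (W x2 y) with h | h
      · rw [abs_of_nonpos (by linarith)]; nlinarith [hW0 x1 y, hW0 x2 y]
      · rw [abs_of_nonneg (by linarith)]; nlinarith [hW0 x1 y, hW0 x2 y]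
    rw [← Finset.sum_mul, ← Finset.mul_sum, Finset.sum_add_distrib, hW1, hW1] at hsum
    have hcp : (0 : ℝ) < c + 1 := by linarith
    rw [le_div_iff₀ hcp]
    nlinarith [hsum]
  have hη_le : η ≤ (c - 1) / (c + 1) := by
    rw [hηdef]
    exact ciSup_le fun x1 => ciSup_le fun x2 => hTV x1 x2
  have hη1 : η < 1 := hlt
  have hcp : (0 : ℝ) < c + 1 := by linarith
  have hηc : η * (c + 1) ≤ c - 1 := (le_div_iff₀ hcp).mp hη_le
  have h1η : (0 : ℝ) < 1 - η := by linarith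
  have hfin : 2 * η / (1 - η) + 1 ≤ c := by
    have hd : 2 * η / (1 - η) ≤ c - 1 := by
      rw [div_le_iff₀ h1η]
      nlinarith [hηc]
    linarith
  calc ENNReal.ofReal (2 * η / (1 - η) + 1) ≤ ENNReal.ofReal c :=
        ENNReal.ofReal_le_ofReal hfin
    _ = R := hRc.symm
end

section
/- The randomized response mechanism W_{k,α} has Dobrushin coefficient η_TV(W_{k,α}) = (2^α − 1)/(2^α + k − 1). In particular for k = 2, η_TV(W_{2,α}) = (2^α − 1)/(2^α + 1), so the bound η_TV(W) ≤ (2^α − 1)/(2^α + 1) for α-locally differentially private mechanisms is tight. -/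
open Finset

noncomputable def RR (k : ℕ) (α : ℝ) : Fin k → Fin k → ℝ := fun x y =>
  ((2:ℝ) ^ α - 1) / ((2:ℝ) ^ α + (k : ℝ) - 1) * (if x = y then 1 else 0) +
    1 / ((2:ℝ) ^ α + (k : ℝ) - 1)

lemma key {k : ℕ} (hk : 2 ≤ k) (α : ℝ) (hα : 0 ≤ α) :
    (⨆ x1 : Fin k, ⨆ x2 : Fin k, (1/2) * ∑ y, |RR k α x1 y - RR k α x2 y|) =
      ((2:ℝ) ^ α - 1) / ((2:ℝ) ^ α + (k : ℝ) - 1) := by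
  have h1 : (1:ℝ) ≤ (2:ℝ) ^ α := Real.one_le_rpow (by norm_num) hα
  set c : ℝ := ((2:ℝ) ^ α - 1) / ((2:ℝ) ^ α + (k : ℝ) - 1) with hc
  have hden : (0:ℝ) < (2:ℝ) ^ α + (k : ℝ) - 1 := by
    have : (2:ℝ) ≤ (k:ℝ) := by exact_mod_cast hk
    linarith
  have hcnn : 0 ≤ c := div_nonneg (by linarith) hden.le
  have hval : ∀ x1 x2 : Fin k, (1/2) * ∑ y, |RR k α x1 y - RR k α x2 y| =
      if x1 = x2 then 0 else c := by
    intro x1 x2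
    by_cases hx : x1 = x2
    · simp [hx]
    · simp only [if_neg hx]
      have hterm : ∀ y : Fin k, |RR k α x1 y - RR k α x2 y| =
          c * ((if y = x1 then 1 else 0) + (if y = x2 then 1 else 0)) := by
        intro y
        simp only [RR, ← hc]
        by_cases h1' : x1 = y <;> by_cases h2' : x2 = y
        · exact absurd (h1'.trans h2'.symm) hx
        · simp [h1', h2', eq_comm, abs_of_nonneg hcnn]
        · simp [h1', h2', eq_comm, abs_of_nonneg hcnn, abs_sub_comm]
        · simp [h1', h2', eq_comm]
      rw [Finset.sum_congr rfl fun y _ => hterm y, ← Finset.mul_sum,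
        Finset.sum_add_distrib, Finset.sum_ite_eq' univ x1 (fun _ => (1:ℝ)),
        Finset.sum_ite_eq' univ x2 (fun _ => (1:ℝ))]
      simp; ring
  haveI : NeZero k := ⟨by omega⟩
  have hbd : ∀ x1 : Fin k, BddAbove (Set.range fun x2 =>
      (1/2) * ∑ y, |RR k α x1 y - RR k α x2 y|) :=
    fun _ => (Set.finite_range _).bddAbove
  apply le_antisymm
  · apply ciSup_le; intro x1
    apply ciSup_le; intro x2
    rw [hval]
    split <;> simp [hcnn]
  · set a : Fin k := ⟨0, by omega⟩ with ha
    set b : Fin k := ⟨1, by omega⟩ with hb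
    have hne : a ≠ b := by simp [ha, hb, Fin.ext_iff]
    have hbd2 : BddAbove (Set.range fun x1 : Fin k =>
        ⨆ x2 : Fin k, (1/2) * ∑ y, |RR k α x1 y - RR k α x2 y|) :=
      (Set.finite_range _).bddAbove
    calc c = (1/2) * ∑ y, |RR k α a y - RR k α b y| := by
          rw [hval]; simp [hne]
      _ ≤ ⨆ x2 : Fin k, (1/2) * ∑ y, |RR k α a y - RR k α x2 y| :=
          le_ciSup (hbd a) b
      _ ≤ ⨆ x1 : Fin k, ⨆ x2 : Fin k, (1/2) * ∑ y, |RR k α x1 y - RR k α x2 y| :=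
          le_ciSup hbd2 a

/-- `η_TV(W_{k,α}) = (2^α − 1)/(2^α + k − 1)`; in particular for
`k = 2` this equals `(2^α − 1)/(2^α + 1)`, so the bound of Theorem 1 is tight. -/
theorem stmt11 {k : ℕ} (hk : 2 ≤ k) (α : ℝ) (hα : 0 ≤ α) :
    (⨆ x1 : Fin k, ⨆ x2 : Fin k, (1/2) * ∑ y, |RR k α x1 y - RR k α x2 y|) =
        ((2:ℝ) ^ α - 1) / ((2:ℝ) ^ α + (k : ℝ) - 1) ∧
      (⨆ x1 : Fin 2, ⨆ x2 : Fin 2, (1/2) * ∑ y, |RR 2 α x1 y - RR 2 α x2 y|) =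
        ((2:ℝ) ^ α - 1) / ((2:ℝ) ^ α + 1) := by
  refine ⟨key hk α hα, ?_⟩
  have h2 := key (le_refl 2) α hα
  rw [h2]; push_cast; ring_nf
end

section
/- The Dobrushin coefficient achieves the supremum of contraction ratios: η_TV(W) = sup over pairs of distinct distributions P_0, P_1 on X of ‖W(P_0) − W(P_1)‖_TV / ‖P_0 − P_1‖_TV, where the supremum is attained at a pair of point masses. -/
/-!
Write `d = P₀ - P₁ = d⁺ - d⁻`; since `∑ d = 0`, both parts have the same mass `s`, and
`∑ₓ |d x| = 2 s`. Coupling `d⁺` with `d⁻` gives `s • W(d) = ∑_{x,x'} d⁺(x) d⁻(x') (W x - W x')`,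
so by the triangle inequality `s ‖W(d)‖₁ ≤ s² · max ‖W x - W x'‖₁`, i.e.
`‖W(P₀) - W(P₁)‖_TV ≤ η_TV(W) ‖P₀ - P₁‖_TV`. Point masses at a pair of rows realising
`η_TV(W)` turn this into an equality; if the maximum sits on the diagonal, then `η_TV(W) = 0`
and any two distinct points will do.
-/

open Finset

section Coupling

variable {X : Type*} [Fintype X] {d : X → ℝ}

theorem sum_posPart_eq_sum_negPart (hd : ∑ x, d x = 0) : ∑ x, (d x)⁺ = ∑ x, (d x)⁻ := by
  rw [← sum_congr rfl fun x _ => posPart_sub_negPart (d x), sum_sub_distrib] at hd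
  linarith

theorem sum_abs_eq_two_mul_sum_posPart (hd : ∑ x, d x = 0) :
    ∑ x, |d x| = 2 * ∑ x, (d x)⁺ := by
  rw [← sum_congr rfl fun x _ => posPart_add_negPart (d x), sum_add_distrib,
    ← sum_posPart_eq_sum_negPart hd]
  ring

theorem sum_posPart_mul_sum_mul_eq (hd : ∑ x, d x = 0) (v : X → ℝ) :
    (∑ x, (d x)⁺) * ∑ x, d x * v x = ∑ x, ∑ x', (d x)⁺ * (d x')⁻ * (v x - v x') := by
  calc (∑ x, (d x)⁺) * ∑ x, d x * v x
      = (∑ x, (d x)⁺ * v x) * (∑ x', (d x')⁻) - (∑ x, (d x)⁺) * ∑ x', (d x')⁻ * v x' := by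
        rw [← sum_posPart_eq_sum_negPart hd,
          ← sum_congr rfl fun x _ => show (d x)⁺ * v x - (d x)⁻ * v x = d x * v x by
            rw [← sub_mul, posPart_sub_negPart], sum_sub_distrib]
        ring
    _ = _ := by
        simp_rw [sum_mul_sum, ← sum_sub_distrib]
        congr! 2 with x _ x' _
        ring

theorem sum_posPart_mul_abs_sum_mul_le (hd : ∑ x, d x = 0) (v : X → ℝ) :
    (∑ x, (d x)⁺) * |∑ x, d x * v x| ≤ ∑ x, ∑ x', (d x)⁺ * (d x')⁻ * |v x - v x'| := by
  rw [← abs_of_nonneg (sum_nonneg fun x _ => posPart_nonneg (d x)), ← abs_mul,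
    sum_posPart_mul_sum_mul_eq hd]
  refine (abs_sum_le_sum_abs _ _).trans (sum_le_sum fun x _ => ?_)
  refine (abs_sum_le_sum_abs _ _).trans_eq (sum_congr rfl fun x' _ => ?_)
  rw [abs_mul, abs_mul, abs_of_nonneg (posPart_nonneg _), abs_of_nonneg (negPart_nonneg _)]

end Coupling

theorem two_mul_sum_abs_sum_mul_le {X Y : Type*} [Fintype X] [Fintype Y] {d : X → ℝ}
    (hd : ∑ x, d x = 0) {W : X → Y → ℝ} {η : ℝ}
    (hη : ∀ x x', ∑ y, |W x y - W x' y| ≤ η) :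
    2 * ∑ y, |∑ x, d x * W x y| ≤ η * ∑ x, |d x| := by
  set s := ∑ x, (d x)⁺
  rw [sum_abs_eq_two_mul_sum_posPart hd]
  rcases (sum_nonneg fun x _ => posPart_nonneg (d x) : 0 ≤ s).eq_or_lt with hs | hs
  · have hd0 : ∀ x, d x = 0 := by
      have := sum_abs_eq_two_mul_sum_posPart hd
      rw [← hs, mul_zero, sum_eq_zero_iff_of_nonneg fun x _ => abs_nonneg _] at this
      exact fun x => abs_eq_zero.mp (this x (mem_univ x))
    simp [hd0]
  · have : s * ∑ y, |∑ x, d x * W x y| ≤ s * (η * s) := calc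
      s * ∑ y, |∑ x, d x * W x y|
        ≤ ∑ y, ∑ x, ∑ x', (d x)⁺ * (d x')⁻ * |W x y - W x' y| := by
          rw [mul_sum]
          exact sum_le_sum fun y _ => sum_posPart_mul_abs_sum_mul_le hd (W · y)
      _ = ∑ x, ∑ x', (d x)⁺ * (d x')⁻ * ∑ y, |W x y - W x' y| := by
          simp_rw [mul_sum]
          rw [sum_comm]
          exact sum_congr rfl fun x _ => sum_comm
      _ ≤ ∑ x, ∑ x', (d x)⁺ * (d x')⁻ * η := by
          gcongr with x _ x' _
          exact hη x x'
      _ = s * (η * s) := by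
          rw [show s * (η * s) = s * ∑ x', (d x')⁻ * η by
            rw [← sum_mul, ← sum_posPart_eq_sum_negPart hd]; ring, sum_mul_sum]
          simp_rw [mul_assoc]
    linarith [le_of_mul_le_mul_left this hs]

def pointMass {X : Type*} [DecidableEq X] (a : X) : X → ℝ := fun x => if x = a then 1 else 0

theorem pointMass_nonneg {X : Type*} [DecidableEq X] (a x : X) : 0 ≤ pointMass a x := by
  unfold pointMass
  positivity

noncomputable section Dobrushin

variable {X Y : Type*} [Fintype X]

def tvDist (P Q : X → ℝ) : ℝ := (1 / 2) * ∑ x, |P x - Q x|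

def channelOutput (W : X → Y → ℝ) (P : X → ℝ) : Y → ℝ := fun y => ∑ x, P x * W x y

def dobrushinCoeff [Fintype Y] (W : X → Y → ℝ) : ℝ := ⨆ x1 : X, ⨆ x2 : X, tvDist (W x1) (W x2)

theorem tvDist_nonneg (P Q : X → ℝ) : 0 ≤ tvDist P Q :=
  mul_nonneg (by norm_num) (sum_nonneg fun x _ => abs_nonneg _)

theorem tvDist_self (P : X → ℝ) : tvDist P P = 0 := by
  simp [tvDist]

theorem tvDist_le_dobrushinCoeff [Fintype Y] (W : X → Y → ℝ) (a b : X) :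
    tvDist (W a) (W b) ≤ dobrushinCoeff W :=
  (le_ciSup (Finite.bddAbove_range _) b).trans
    (le_ciSup (Finite.bddAbove_range fun a => ⨆ b, tvDist (W a) (W b)) a)

theorem exists_ne_tvDist_eq_dobrushinCoeff [Fintype Y] [Nontrivial X] (W : X → Y → ℝ) :
    ∃ a b, a ≠ b ∧ tvDist (W a) (W b) = dobrushinCoeff W := by
  obtain ⟨⟨a, b⟩, hmax⟩ := Finite.exists_max fun p : X × X => tvDist (W p.1) (W p.2)
  have hη : tvDist (W a) (W b) = dobrushinCoeff W :=
    le_antisymm (tvDist_le_dobrushinCoeff W a b)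
      (ciSup_le fun a' => ciSup_le fun b' => hmax (a', b'))
  by_cases hab : a = b
  · obtain ⟨c, c', hcc'⟩ := exists_pair_ne X
    refine ⟨c, c', hcc', le_antisymm (tvDist_le_dobrushinCoeff W c c') ?_⟩
    rw [← hη, hab, tvDist_self]
    exact tvDist_nonneg _ _
  · exact ⟨a, b, hab, hη⟩

theorem tvDist_channelOutput_le [Fintype Y] (W : X → Y → ℝ) {P Q : X → ℝ}
    (hPQ : ∑ x, P x = ∑ x, Q x) :
    tvDist (channelOutput W P) (channelOutput W Q) ≤ dobrushinCoeff W * tvDist P Q := by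
  have hd : ∑ x, (P x - Q x) = 0 := by rw [sum_sub_distrib, hPQ, sub_self]
  have key := two_mul_sum_abs_sum_mul_le hd (W := W) (η := 2 * dobrushinCoeff W) fun x x' => by
    have := tvDist_le_dobrushinCoeff W x x'
    rw [tvDist] at this
    linarith
  simp only [tvDist, channelOutput, ← sum_sub_distrib, ← sub_mul]
  linarith

theorem channelOutput_pointMass [DecidableEq X] (W : X → Y → ℝ) (a : X) :
    channelOutput W (pointMass a) = W a := by
  ext y
  simp [channelOutput, pointMass]

theorem sum_pointMass [DecidableEq X] (a : X) : ∑ x, pointMass a x = 1 := by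
  simp [pointMass]

theorem tvDist_pointMass [DecidableEq X] {a b : X} (hab : a ≠ b) :
    tvDist (pointMass a) (pointMass b) = 1 := by
  rw [tvDist, ← sum_subset (subset_univ {a, b}) fun x _ hx => by
    simp_all [pointMass], sum_pair hab]
  simp [pointMass, hab, hab.symm]
  norm_num

end Dobrushin

theorem stmt15_general {X Y : Type*} [Fintype X] [Fintype Y] [DecidableEq X]
    (hX : 2 ≤ Fintype.card X)
    (W : X → Y → ℝ) :
    (⨆ x1 : X, ⨆ x2 : X, (1/2) * ∑ y, |W x1 y - W x2 y|) =
        sSup {r : ℝ | ∃ P0 P1 : X → ℝ,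
          (∀ x, 0 ≤ P0 x) ∧ ∑ x, P0 x = 1 ∧
          (∀ x, 0 ≤ P1 x) ∧ ∑ x, P1 x = 1 ∧
          0 < (1/2) * ∑ x, |P0 x - P1 x| ∧
          r = ((1/2) * ∑ y, |(∑ x, P0 x * W x y) - (∑ x, P1 x * W x y)|) /
                ((1/2) * ∑ x, |P0 x - P1 x|)} ∧
      ∃ x1 x2 : X, x1 ≠ x2 ∧
        (⨆ a : X, ⨆ b : X, (1/2) * ∑ y, |W a y - W b y|) =
          ((1/2) * ∑ y, |(∑ x, (if x = x1 then (1:ℝ) else 0) * W x y) -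
              (∑ x, (if x = x2 then (1:ℝ) else 0) * W x y)|) /
            ((1/2) * ∑ x, |(if x = x1 then (1:ℝ) else 0) -
              (if x = x2 then (1:ℝ) else 0)|) := by
  have : Nontrivial X := Fintype.one_lt_card_iff_nontrivial.mp hX
  obtain ⟨a, b, hab, hη⟩ := exists_ne_tvDist_eq_dobrushinCoeff W
  have hratio : dobrushinCoeff W = tvDist (channelOutput W (pointMass a))
      (channelOutput W (pointMass b)) / tvDist (pointMass a) (pointMass b) := by
    rw [channelOutput_pointMass, channelOutput_pointMass, tvDist_pointMass hab, div_one, hη]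
  refine ⟨(IsGreatest.csSup_eq ⟨?_, ?_⟩).symm, a, b, hab, hratio⟩
  · refine ⟨pointMass a, pointMass b, pointMass_nonneg a, sum_pointMass a, pointMass_nonneg b,
      sum_pointMass b, zero_lt_one.trans_eq (tvDist_pointMass hab).symm, hratio⟩
  · rintro r ⟨P0, P1, -, h0, -, h1, hpos, rfl⟩
    exact (div_le_iff₀ hpos).mpr (tvDist_channelOutput_le W (h0.trans h1.symm))

/-- the Dobrushin coefficient equals the supremum of contraction
ratios over pairs of distinct distributions, and this supremum is attained at a
pair of point masses. -/
theorem stmt15 {X Y : Type*} [Fintype X] [Fintype Y] [DecidableEq X] [Nonempty X] [Nonempty Y]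
    (hX : 2 ≤ Fintype.card X)
    (W : X → Y → ℝ)
    (hW0 : ∀ x y, 0 ≤ W x y) (hW1 : ∀ x, ∑ y, W x y = 1) :
    (⨆ x1 : X, ⨆ x2 : X, (1/2) * ∑ y, |W x1 y - W x2 y|) =
        sSup {r : ℝ | ∃ P0 P1 : X → ℝ,
          (∀ x, 0 ≤ P0 x) ∧ ∑ x, P0 x = 1 ∧
          (∀ x, 0 ≤ P1 x) ∧ ∑ x, P1 x = 1 ∧
          0 < (1/2) * ∑ x, |P0 x - P1 x| ∧
          r = ((1/2) * ∑ y, |(∑ x, P0 x * W x y) - (∑ x, P1 x * W x y)|) /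
                ((1/2) * ∑ x, |P0 x - P1 x|)} ∧
      ∃ x1 x2 : X, x1 ≠ x2 ∧
        (⨆ a : X, ⨆ b : X, (1/2) * ∑ y, |W a y - W b y|) =
          ((1/2) * ∑ y, |(∑ x, (if x = x1 then (1:ℝ) else 0) * W x y) -
              (∑ x, (if x = x2 then (1:ℝ) else 0) * W x y)|) /
            ((1/2) * ∑ x, |(if x = x1 then (1:ℝ) else 0) -
              (if x = x2 then (1:ℝ) else 0)|) :=
  stmt15_general hX W
end
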